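/- arXiv:2104.06226 — 6 statements merged into one kernel-verified Lean document; each statement's English description precedes it below -/
import Mathlib

section
/- Let K be a field of characteristic 0 and let D, X be commuting derivations on K. Let a, b, p, q ∈ K with q ≠ 0, q² = p³ − a·p − b, and D(a) = D(b) = X(a) = X(b) = 0. Then X(D(p)/q) = D(X(p)/q). -/
/-- If `D` and `X` are commuting derivations on a field `K` of characteristic `0`,
`q ≠ 0`, `q² = p³ - a·p - b` with `a, b` constants for both `D` and `X`, then
`X (D p / q) = D (X p / q)`: applying `X` to the integrand of an elliptic
integral of the first kind commutes with `D`. -/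
theorem commuting_derivations_elliptic_first_kind {K : Type*} [Field K] [CharZero K]
    (D X : Derivation ℚ K K)
    (hcomm : ∀ x : K, D (X x) = X (D x))
    (a b p q : K) (hq : q ≠ 0)
    (hcurve : q ^ 2 = p ^ 3 - a * p - b)
    (hDa : D a = 0) (hDb : D b = 0) (hXa : X a = 0) (hXb : X b = 0) :
    X (D p / q) = D (X p / q) := by
  have hD := congrArg D hcurve
  have hX := congrArg X hcurve
  simp only [map_sub, Derivation.leibniz, Derivation.leibniz_pow, hDa, hDb, hXa, hXb,
    zero_mul, mul_zero, sub_zero, zero_smul, smul_eq_mul, nsmul_eq_mul] at hD hX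
  norm_num at hD hX
  rw [Derivation.leibniz_div, Derivation.leibniz_div, hcomm]
  have key : 2 * q * (D p * X q) = 2 * q * (X p * D q) := by
    linear_combination D p * hX - X p * hD
  have key2 : D p * X q = X p * D q :=
    mul_left_cancel₀ (mul_ne_zero two_ne_zero hq) key
  simp only [smul_eq_mul]
  rw [key2]
end

section
/- Let K be a field of characteristic 0 and let D, X be commuting derivations on K. Let a, b, p, q ∈ K with q ≠ 0, q² = p³ − a·p − b, and D(a) = D(b) = X(a) = X(b) = 0. Then X(p·D(p)/q) = D(p·X(p)/q). -/
/-- If `D` and `X` are commuting derivations on a field `K` of characteristic `0`,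
`q ≠ 0`, `q² = p³ - a·p - b` with `a, b` constants for both `D` and `X`, then
`X (p·D p / q) = D (p·X p / q)`: applying `X` to the integrand of an elliptic
integral of the second kind commutes with `D`. -/
theorem commuting_derivations_elliptic_second_kind {K : Type*} [Field K] [CharZero K]
    (D X : Derivation ℚ K K)
    (hcomm : ∀ x : K, D (X x) = X (D x))
    (a b p q : K) (hq : q ≠ 0)
    (hcurve : q ^ 2 = p ^ 3 - a * p - b)
    (hDa : D a = 0) (hDb : D b = 0) (hXa : X a = 0) (hXb : X b = 0) :
    X (p * D p / q) = D (p * X p / q) := by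
  have hDq : 2 * q * D q = (3 * p ^ 2 - a) * D p := by
    have h := congrArg D hcurve
    simp only [map_sub, Derivation.leibniz, Derivation.leibniz_pow, hDa, hDb,
      smul_eq_mul, zero_mul, mul_zero, sub_zero, zero_sub, Nat.cast_ofNat] at h
    push_cast at h
    linear_combination h
  have hXq : 2 * q * X q = (3 * p ^ 2 - a) * X p := by
    have h := congrArg X hcurve
    simp only [map_sub, Derivation.leibniz, Derivation.leibniz_pow, hXa, hXb,
      smul_eq_mul, zero_mul, mul_zero, sub_zero, zero_sub, Nat.cast_ofNat] at h
    push_cast at h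
    linear_combination h
  have hc := hcomm p
  have hDq' : D q = (3 * p ^ 2 - a) * D p / (2 * q) := by
    field_simp; linear_combination hDq
  have hXq' : X q = (3 * p ^ 2 - a) * X p / (2 * q) := by
    field_simp; linear_combination hXq
  rw [Derivation.leibniz_div, Derivation.leibniz_div]
  simp only [Derivation.leibniz, smul_eq_mul, inv_pow, hDq', hXq', hc]
  field_simp
end

section
/- Let K be a field of characteristic 0 and let D, X be commuting derivations on K. Let a, b, c, p, q ∈ K with q ≠ 0, p ≠ c, q² = p³ − a·p − b, and D(a) = D(b) = D(c) = X(a) = X(b) = X(c) = 0. Then X(D(p)/((p − c)·q)) = D(X(p)/((p − c)·q)). -/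
/-- If `D` and `X` are commuting derivations on a field `K` of characteristic `0`,
`q ≠ 0`, `p ≠ c`, `q² = p³ - a·p - b` with `a, b, c` constants for both `D` and `X`,
then `X (D p / ((p - c)·q)) = D (X p / ((p - c)·q))`: applying `X` to the integrand
of an elliptic integral of the third kind commutes with `D`. -/
theorem commuting_derivations_elliptic_third_kind {K : Type*} [Field K] [CharZero K]
    (D X : Derivation ℚ K K)
    (hcomm : ∀ x : K, D (X x) = X (D x))
    (a b c p q : K) (hq : q ≠ 0) (hpc : p ≠ c)
    (hcurve : q ^ 2 = p ^ 3 - a * p - b)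
    (hDa : D a = 0) (hDb : D b = 0) (hDc : D c = 0)
    (hXa : X a = 0) (hXb : X b = 0) (hXc : X c = 0) :
    X (D p / ((p - c) * q)) = D (X p / ((p - c) * q)) := by
  have hu : p - c ≠ 0 := sub_ne_zero.mpr hpc
  have hd : (p - c) * q ≠ 0 := mul_ne_zero hu hq
  have hDcurve : (2 : K) * q * D q = (3 * p ^ 2 - a) * D p := by
    have h := congrArg D hcurve
    simp only [Derivation.leibniz_pow, map_sub, Derivation.leibniz, hDa, hDb,
      nsmul_eq_mul, Nat.cast_ofNat, pow_one, mul_zero, sub_zero, smul_eq_mul] at h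
    linear_combination h
  have hXcurve : (2 : K) * q * X q = (3 * p ^ 2 - a) * X p := by
    have h := congrArg X hcurve
    simp only [Derivation.leibniz_pow, map_sub, Derivation.leibniz, hXa, hXb,
      nsmul_eq_mul, Nat.cast_ofNat, pow_one, mul_zero, sub_zero, smul_eq_mul] at h
    linear_combination h
  have key : D p * X q = X p * D q := by
    have h2 : (2 : K) * q ≠ 0 := by
      simp [hq]
    apply mul_left_cancel₀ h2
    calc (2:K) * q * (D p * X q) = D p * ((2:K) * q * X q) := by ring
    _ = D p * ((3 * p ^ 2 - a) * X p) := by rw [hXcurve]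
    _ = X p * ((3 * p ^ 2 - a) * D p) := by ring
    _ = X p * ((2:K) * q * D q) := by rw [hDcurve]
    _ = (2:K) * q * (X p * D q) := by ring
  rw [Derivation.leibniz_div, Derivation.leibniz_div]
  rw [show X (D p) = D (X p) from (hcomm p).symm]
  simp only [Derivation.leibniz, map_sub, hDc, hXc, smul_eq_mul, sub_zero, mul_zero]
  linear_combination (-(((p - c) * q)⁻¹ ^ 2 * (p - c))) * key
end

section
/- Let K be a field of characteristic 0, let D, X be commuting derivations on K, let v₀ ∈ K, let v₁, …, v_l ∈ K be nonzero, and let c₁, …, c_l ∈ K satisfy D(cᵢ) = X(cᵢ) = 0 for all i. Set f = D(v₀) + Σᵢ cᵢ·D(vᵢ)/vᵢ. If X(f) = 0, then X(v₀) + Σᵢ cᵢ·X(vᵢ)/vᵢ is a constant, i.e. D(X(v₀) + Σᵢ cᵢ·X(vᵢ)/vᵢ) = 0. -/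
/-- Step 2 of the proof of the Liouville principle (logarithmic case).
If `D` and `X` are commuting derivations on a field `K` of characteristic `0`,
the `vᵢ` are nonzero, the `cᵢ` are constants for both `D` and `X`,
`f = D v₀ + Σᵢ cᵢ · D vᵢ / vᵢ` and `X f = 0`, then
`X v₀ + Σᵢ cᵢ · X vᵢ / vᵢ` is a constant for `D`. -/
theorem applying_X_to_liouville_expression_log {K : Type*} [Field K] [CharZero K]
    (D X : Derivation ℚ K K)
    (hcomm : ∀ x : K, D (X x) = X (D x))
    (l : ℕ) (v₀ : K) (v : Fin l → K) (hv : ∀ i, v i ≠ 0)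
    (c : Fin l → K) (hcD : ∀ i, D (c i) = 0) (hcX : ∀ i, X (c i) = 0)
    (f : K) (hf : f = D v₀ + ∑ i, c i * D (v i) / v i)
    (hXf : X f = 0) :
    D (X v₀ + ∑ i, c i * X (v i) / v i) = 0 := by
  have key : D (X v₀ + ∑ i, c i * X (v i) / v i) = X f := by
    rw [hf, map_add, map_add, map_sum, map_sum, hcomm]
    congr 1
    apply Finset.sum_congr rfl
    intro i _
    have hvi := hv i
    simp only [Derivation.leibniz_div, Derivation.leibniz, hcD i, hcX i,
      smul_eq_mul, hcomm]
    ring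
  rw [key, hXf]
end

section
/- Let K be a field of characteristic 0, let D, X be commuting derivations on K, let v₀ ∈ K, let v₁, …, v_l, q₁, …, q_l ∈ K with qᵢ ≠ 0, and let aᵢ, bᵢ, cᵢ ∈ K satisfy qᵢ² = vᵢ³ − aᵢ·vᵢ − bᵢ and D(aᵢ) = D(bᵢ) = D(cᵢ) = X(aᵢ) = X(bᵢ) = X(cᵢ) = 0 for all i. Set f = D(v₀) + Σᵢ cᵢ·D(vᵢ)/qᵢ. If X(f) = 0, then D(X(v₀) + Σᵢ cᵢ·X(vᵢ)/qᵢ) = 0. -/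
/-- Step 2 of the proof of the Liouville principle (elliptic integral of the
first kind case).  If `D` and `X` are commuting derivations on a field `K` of
characteristic `0`, `qᵢ ≠ 0`, `qᵢ² = vᵢ³ - aᵢ·vᵢ - bᵢ` with `aᵢ, bᵢ, cᵢ`
constants for both `D` and `X`, `f = D v₀ + Σᵢ cᵢ · D vᵢ / qᵢ` and `X f = 0`,
then `X v₀ + Σᵢ cᵢ · X vᵢ / qᵢ` is a constant for `D`. -/
theorem applying_X_to_liouville_expression_elliptic {K : Type*} [Field K] [CharZero K]
    (D X : Derivation ℚ K K)
    (hcomm : ∀ x : K, D (X x) = X (D x))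
    (l : ℕ) (v₀ : K) (v q : Fin l → K) (hq : ∀ i, q i ≠ 0)
    (a b c : Fin l → K)
    (hcurve : ∀ i, q i ^ 2 = v i ^ 3 - a i * v i - b i)
    (haD : ∀ i, D (a i) = 0) (hbD : ∀ i, D (b i) = 0) (hcD : ∀ i, D (c i) = 0)
    (haX : ∀ i, X (a i) = 0) (hbX : ∀ i, X (b i) = 0) (hcX : ∀ i, X (c i) = 0)
    (f : K) (hf : f = D v₀ + ∑ i, c i * D (v i) / q i)
    (hXf : X f = 0) :
    D (X v₀ + ∑ i, c i * X (v i) / q i) = 0 := by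
  have key : ∀ i, D (q i) * X (v i) = X (q i) * D (v i) := by
    intro i
    have hD : 2 * q i * D (q i) = (3 * v i ^ 2 - a i) * D (v i) := by
      have := congrArg D (hcurve i)
      simp only [map_sub, Derivation.leibniz, Derivation.leibniz_pow, haD i, hbD i,
        smul_eq_mul] at this
      push_cast at this
      ring_nf at this ⊢
      linear_combination this
    have hX : 2 * q i * X (q i) = (3 * v i ^ 2 - a i) * X (v i) := by
      have := congrArg X (hcurve i)
      simp only [map_sub, Derivation.leibniz, Derivation.leibniz_pow, haX i, hbX i,
        smul_eq_mul] at this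
      push_cast at this
      ring_nf at this ⊢
      linear_combination this
    have h2q : (2 : K) * q i ≠ 0 := by
      simp [hq i]
    apply mul_left_cancel₀ h2q
    calc 2 * q i * (D (q i) * X (v i)) = (2 * q i * D (q i)) * X (v i) := by ring
      _ = (3 * v i ^ 2 - a i) * D (v i) * X (v i) := by rw [hD]
      _ = (2 * q i * X (q i)) * D (v i) := by rw [hX]; ring
      _ = 2 * q i * (X (q i) * D (v i)) := by ring
  have term : ∀ i, D (c i * X (v i) / q i) = X (c i * D (v i) / q i) := by
    intro i
    rw [Derivation.leibniz_div, Derivation.leibniz_div]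
    simp only [smul_sub, smul_eq_mul, Derivation.leibniz, hcD i, hcX i, mul_zero, zero_add,
      zero_mul, add_zero]
    rw [hcomm (v i)]
    field_simp
    rw [div_eq_div_iff (pow_ne_zero 2 (hq i)) (pow_ne_zero 2 (hq i))]
    linear_combination (-(c i * q i ^ 2)) * key i
  rw [map_add, map_sum]
  simp only [term, hcomm v₀]
  rw [← map_sum X (fun i => c i * D (v i) / q i) Finset.univ, ← map_add, ← hf, hXf]
end

section
/- Let F ⊆ E be a finite extension of fields of characteristic 0 and let D be a derivation on E with D(F) ⊆ F. Then for every nonzero y ∈ E, D(Norm_{E/F}(y)) / Norm_{E/F}(y) = Tr_{E/F}(D(y)/y), where Norm_{E/F} and Tr_{E/F} denote the field norm and trace of E over F. -/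
/-!
Write `L x` for the matrix of multiplication by `x` in an `F`-basis `b` of `E`, `d` for the
restriction of `D` to `F` and `T` for the matrix whose columns are the coordinates of the `D (b i)`.
In coordinates `D` acts as `d` entrywise plus `T`, so the Leibniz rule for `D (y * b j)` reads
`(L y).map d = L (D y) + L y * T - T * L y`. Jacobi's formula `d (det A) = tr (adj A * A.map d)`
and `adj (L y) = det (L y) • L y⁻¹` then give `d (N y) = N y * (Tr (y⁻¹ * D y) + tr T - tr T)`.
-/

open Matrix Finset

theorem Derivation.map_prod {R A M : Type*} [CommSemiring R] [CommSemiring A] [AddCommMonoid M]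
    [Algebra R A] [Module A M] [Module R M] (D : Derivation R A M) {ι : Type*} [DecidableEq ι]
    (s : Finset ι) (f : ι → A) :
    D (∏ i ∈ s, f i) = ∑ i ∈ s, (∏ j ∈ s.erase i, f j) • D (f i) := by
  induction s using Finset.induction_on with
  | empty => simp
  | insert a s ha ih =>
    rw [prod_insert ha, D.leibniz, ih, sum_insert ha, erase_insert ha, smul_sum, add_comm]
    congr 1
    refine sum_congr rfl fun i hi => ?_
    rw [erase_insert_of_ne (ne_of_mem_of_not_mem hi ha).symm,
      prod_insert fun h => ha (mem_of_mem_erase h), mul_smul]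

theorem Derivation.map_det {R A n : Type*} [CommSemiring R] [CommRing A] [Algebra R A]
    [Fintype n] [DecidableEq n] (D : Derivation R A A) (M : Matrix n n A) :
    D M.det = ∑ i, (M.updateCol i fun k => D (M k i)).det := by
  simp only [det_apply, map_sum, Units.smul_def, map_zsmul, D.map_prod, smul_sum]
  rw [sum_comm]
  refine sum_congr rfl fun i _ => sum_congr rfl fun σ _ => ?_
  rw [← prod_erase_mul _ _ (mem_univ i), updateCol_self, smul_eq_mul]
  congr 2
  exact prod_congr rfl fun j hj => (updateCol_ne (ne_of_mem_erase hj)).symm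

theorem Matrix.trace_adjugate_mul {A n : Type*} [CommRing A] [Fintype n] [DecidableEq n]
    (M N : Matrix n n A) :
    (M.adjugate * N).trace = ∑ i, (M.updateCol i fun k => N k i).det := by
  refine sum_congr rfl fun i _ => ?_
  rw [← cramer_apply, cramer_eq_adjugate_mulVec]
  rfl

theorem Derivation.map_det_eq_trace {R A n : Type*} [CommSemiring R] [CommRing A] [Algebra R A]
    [Fintype n] [DecidableEq n] (D : Derivation R A A) (M : Matrix n n A) :
    D M.det = (M.adjugate * M.map D).trace := by
  rw [D.map_det, trace_adjugate_mul]
  rfl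

theorem Derivation.exists_restrict {R A B : Type*} [CommSemiring R] [CommRing A] [CommRing B]
    [Algebra R B] [Algebra A B] (hinj : Function.Injective (algebraMap A B))
    (D : Derivation R B B) (hD : ∀ a, ∃ a', D (algebraMap A B a) = algebraMap A B a') :
    ∃ d : Derivation ℤ A A, ∀ a, D (algebraMap A B a) = algebraMap A B (d a) := by
  choose d hd using hD
  have map_add (a a' : A) : d (a + a') = d a + d a' := hinj <| by
    simp only [← hd, _root_.map_add]
  have leibniz (a a' : A) : d (a * a') = a • d a' + a' • d a := hinj <| by
    simp only [← hd, _root_.map_mul, D.leibniz, smul_eq_mul, _root_.map_add]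
  exact ⟨.mk' (AddMonoidHom.mk' d map_add).toIntLinearMap leibniz, hd⟩

section Coordinates

variable {R F E ι : Type*} [CommSemiring R] [CommRing F] [CommRing E] [Algebra F E]
  [Algebra R E] [Fintype ι] [DecidableEq ι] (b : Module.Basis ι F E) (D : Derivation R E E)
  (d : Derivation ℤ F F) (hD : ∀ a, D (algebraMap F E a) = algebraMap F E (d a))
include hD

theorem Module.Basis.repr_derivation (z : E) :
    ⇑(b.repr (D z)) = d ∘ b.repr z + b.toMatrix (D ∘ b) *ᵥ b.repr z := by
  have map_smul (c : F) (x : E) : D (c • x) = c • D x + d c • x := by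
    rw [Algebra.smul_def, Algebra.smul_def, D.leibniz, hD, smul_eq_mul, smul_eq_mul,
      Algebra.smul_def, add_comm, mul_comm x]
    ring
  ext k
  conv_lhs => rw [← b.sum_repr z]
  simp only [map_sum, map_smul, map_add, Finsupp.coe_finsetSum, Finset.sum_apply,
    Finsupp.coe_add, Pi.add_apply, sum_add_distrib]
  simp [Finsupp.single_apply, mulVec, dotProduct, Module.Basis.toMatrix_apply, mul_comm, add_comm]

theorem Algebra.leftMulMatrix_map_derivation (y : E) :
    (Algebra.leftMulMatrix b y).map d =
      Algebra.leftMulMatrix b (D y) + Algebra.leftMulMatrix b y * b.toMatrix (D ∘ b)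
        - b.toMatrix (D ∘ b) * Algebra.leftMulMatrix b y := by
  ext k j
  have h := congr_fun (b.repr_derivation D d hD (y * b j)) k
  rw [D.leibniz, smul_eq_mul, smul_eq_mul, map_add, Finsupp.add_apply, mul_comm (b j),
    ← Algebra.leftMulMatrix_eq_repr_mul, ← Algebra.leftMulMatrix_mulVec_repr] at h
  simp only [Function.comp_apply, Pi.add_apply, mulVec, dotProduct,
    ← Algebra.leftMulMatrix_eq_repr_mul, Module.Basis.toMatrix_apply] at h
  simp only [Matrix.sub_apply, Matrix.add_apply, map_apply, mul_apply,
    Module.Basis.toMatrix_apply, Function.comp_apply]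
  linear_combination -h

theorem Algebra.trace_leftMulMatrix_mul_map_derivation {y y' : E} (hy : y' * y = 1) :
    (Algebra.leftMulMatrix b y' * (Algebra.leftMulMatrix b y).map d).trace =
      Algebra.trace F E (y' * D y) := by
  have hinv : Algebra.leftMulMatrix b y' * Algebra.leftMulMatrix b y = 1 := by
    rw [← map_mul, hy, map_one]
  have hinv' : Algebra.leftMulMatrix b y * Algebra.leftMulMatrix b y' = 1 := by
    rw [← map_mul, mul_comm, hy, map_one]
  rw [Algebra.leftMulMatrix_map_derivation b D d hD, Matrix.mul_sub, Matrix.mul_add, trace_sub,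
    trace_add, ← map_mul, ← Matrix.mul_assoc, hinv, Matrix.one_mul,
    trace_mul_comm (Algebra.leftMulMatrix b y'), Matrix.mul_assoc, hinv', Matrix.mul_one,
    add_sub_cancel_right, Algebra.trace_eq_matrix_trace b]

theorem Derivation.map_norm_eq_norm_mul_trace [Module.Free F E] [Module.Finite F E] {y y' : E}
    (hy : y' * y = 1) :
    d (Algebra.norm F y) = Algebra.norm F y * Algebra.trace F E (y' * D y) := by
  classical
  let b := Module.Free.chooseBasis F E
  set M := Algebra.leftMulMatrix b y
  have hadj : M.adjugate = M.det • Algebra.leftMulMatrix b y' := by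
    rw [← Matrix.one_mul M.adjugate, ← map_one (Algebra.leftMulMatrix b), ← hy, map_mul,
      Matrix.mul_assoc, mul_adjugate, Matrix.mul_smul, Matrix.mul_one]
  rw [Algebra.norm_eq_matrix_det b, d.map_det_eq_trace, hadj, Matrix.smul_mul, trace_smul,
    Algebra.trace_leftMulMatrix_mul_map_derivation b D d hD hy, smul_eq_mul]

end Coordinates

theorem deriv_norm_div_norm_eq_trace_logDeriv_general
    {F E : Type*} [Field F] [Field E] [Algebra F E]
    [CharZero E] [FiniteDimensional F E]
    (D : Derivation ℚ E E)
    (hDF : ∀ x : F, ∃ y : F, D (algebraMap F E x) = algebraMap F E y)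
    (y : E) (hy : y ≠ 0) :
    D (algebraMap F E (Algebra.norm F y)) / algebraMap F E (Algebra.norm F y)
      = algebraMap F E (Algebra.trace F E (D y / y)) := by
  obtain ⟨d, hd⟩ := D.exists_restrict (algebraMap F E).injective hDF
  have hnorm : algebraMap F E (Algebra.norm F y) ≠ 0 :=
    (map_ne_zero _).mpr (Algebra.norm_ne_zero_iff.mpr hy)
  rw [hd, D.map_norm_eq_norm_mul_trace d hd (inv_mul_cancel₀ hy), map_mul,
    mul_div_cancel_left₀ _ hnorm, div_eq_inv_mul]

/-- **Logarithmic derivative of the norm is the trace of the logarithmic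
derivative.**  Let `E/F` be a finite extension of fields of characteristic `0`
and `D` a derivation on `E` mapping `F` into `F`.  Then for every nonzero
`y ∈ E`, `D(Norm_{E/F} y) / Norm_{E/F} y = Tr_{E/F} (D y / y)`. -/
theorem deriv_norm_div_norm_eq_trace_logDeriv
    {F E : Type*} [Field F] [Field E] [Algebra F E]
    [CharZero F] [CharZero E] [FiniteDimensional F E]
    (D : Derivation ℚ E E)
    (hDF : ∀ x : F, ∃ y : F, D (algebraMap F E x) = algebraMap F E y)
    (y : E) (hy : y ≠ 0) :
    D (algebraMap F E (Algebra.norm F y)) / algebraMap F E (Algebra.norm F y)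
      = algebraMap F E (Algebra.trace F E (D y / y)) :=
  deriv_norm_div_norm_eq_trace_logDeriv_general D hDF y hy
end
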